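/- Let X, Y be Hilbert spaces, A ∈ B(X,Y), and T ⊆ X, S ⊆ Y closed subspaces such that G = A_{T,S}^{(2)} exists. If T' is a closed subspace of X with δ̂(T,T') < 1/(1 + ‖A‖·‖G‖), then δ̂(AT, AT') ≤ ‖A‖·‖G‖·δ̂(T,T') / (1 − (1 + ‖A‖·‖G‖)·δ̂(T,T')). -/

import Mathlib

/-!
Since `G A x = x` on `T = R(G)`, `A` is bounded below on `T`: `‖x‖ ≤ ‖G‖ ‖A x‖`. A unit vector
`A x` of `A T` then has `‖x‖ ≤ ‖G‖`, and `A` moves `x` to within `‖A‖ ‖G‖ δ̂` of `A T'`. Conversely,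
for `A x'` with `x' ∈ T'` no such bound is available a priori, but comparing `x'` with a near point
of `T` gives `‖x'‖ ≤ ‖G‖ + (1 + ‖A‖ ‖G‖) δ̂ ‖x'‖`, i.e. `‖x'‖ ≤ ‖G‖ / (1 - (1 + ‖A‖ ‖G‖) δ̂)`.
-/

noncomputable section

open ContinuousLinearMap

/-- δ(M,N) = sup{dist(x,N) : x ∈ M, ‖x‖ = 1}, with sSup ∅ = 0 covering M = {0}. -/
def gapDelta {H : Type*} [NormedAddCommGroup H] (M N : Set H) : ℝ :=
  sSup ((fun x => Metric.infDist x N) '' {x | x ∈ M ∧ ‖x‖ = 1})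

/-- The gap δ̂(M,N) = max{δ(M,N), δ(N,M)}. -/
def gapHat {H : Type*} [NormedAddCommGroup H] (M N : Set H) : ℝ :=
  max (gapDelta M N) (gapDelta N M)

/-- Orthogonal projection onto a closed subspace, as an operator H →L[ℂ] H. -/
def projCLM {H : Type*} [NormedAddCommGroup H] [InnerProductSpace ℂ H] [CompleteSpace H]
    (K : Submodule ℂ H) (hK : IsClosed (K : Set H)) : H →L[ℂ] H :=
  haveI := hK.completeSpace_coe
  K.subtypeL.comp K.orthogonalProjectionOnto

/-- G is the outer inverse A_{T,S}^{(2)}: GAG = G, R(G) = T, N(G) = S. -/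
def IsOuterInv {X Y : Type*} [NormedAddCommGroup X] [NormedSpace ℂ X]
    [NormedAddCommGroup Y] [NormedSpace ℂ Y]
    (A : X →L[ℂ] Y) (T : Submodule ℂ X) (S : Submodule ℂ Y) (G : Y →L[ℂ] X) : Prop :=
  G ∘L (A ∘L G) = G ∧ LinearMap.range (G : Y →ₗ[ℂ] X) = T ∧ LinearMap.ker (G : Y →ₗ[ℂ] X) = S

/-- B is the Moore–Penrose inverse of A. -/
def IsMPInv {X Y : Type*} [NormedAddCommGroup X] [InnerProductSpace ℂ X] [CompleteSpace X]
    [NormedAddCommGroup Y] [InnerProductSpace ℂ Y] [CompleteSpace Y]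
    (A : X →L[ℂ] Y) (B : Y →L[ℂ] X) : Prop :=
  A ∘L (B ∘L A) = A ∧ B ∘L (A ∘L B) = B ∧
  adjoint (A ∘L B) = A ∘L B ∧ adjoint (B ∘L A) = B ∘L A

variable {X Y : Type*} [NormedAddCommGroup X] [InnerProductSpace ℂ X] [CompleteSpace X]
  [NormedAddCommGroup Y] [InnerProductSpace ℂ Y] [CompleteSpace Y]

open Metric Set Pointwise

lemma LipschitzWith.infDist_image_le {α β : Type*} [PseudoMetricSpace α] [PseudoMetricSpace β]
    {K : NNReal} {f : α → β} (hf : LipschitzWith K f) (x : α) (s : Set α) :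
    infDist (f x) (f '' s) ≤ K * infDist x s := by
  rcases s.eq_empty_or_nonempty with rfl | hs
  · simp
  have := hs.to_subtype
  rw [infDist_eq_iInf (x := x), Real.mul_iInf_of_nonneg K.coe_nonneg]
  refine le_ciInf fun y => ?_
  calc infDist (f x) (f '' s) ≤ dist (f x) (f y) := infDist_le_dist_of_mem (mem_image_of_mem f y.2)
    _ ≤ K * dist x y := hf.dist_le_mul x y

section Gap

variable {H : Type*} [NormedAddCommGroup H]

lemma gapDelta_nonneg (M N : Set H) : 0 ≤ gapDelta M N :=
  Real.sSup_nonneg (by rintro _ ⟨x, _, rfl⟩; exact infDist_nonneg)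

lemma gapDelta_le {M N : Set H} {c : ℝ} (hc : 0 ≤ c)
    (h : ∀ x ∈ M, ‖x‖ = 1 → infDist x N ≤ c) : gapDelta M N ≤ c :=
  Real.sSup_le (by rintro _ ⟨x, ⟨hxM, hx1⟩, rfl⟩; exact h x hxM hx1) hc

lemma infDist_le_gapDelta {M N : Set H} (hN : (0 : H) ∈ N) {x : H} (hxM : x ∈ M)
    (hx : ‖x‖ = 1) : infDist x N ≤ gapDelta M N := by
  refine le_csSup ⟨1, ?_⟩ ⟨x, ⟨hxM, hx⟩, rfl⟩
  rintro _ ⟨y, ⟨_, hy⟩, rfl⟩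
  simpa [hy] using infDist_le_dist_of_mem (x := y) hN

lemma infDist_le_norm_mul_gapDelta {𝕜 : Type*} [RCLike 𝕜] [NormedSpace 𝕜 H]
    (M N : Submodule 𝕜 H) {x : H} (hx : x ∈ M) :
    infDist x N ≤ ‖x‖ * gapDelta (M : Set H) N := by
  rcases eq_or_ne x 0 with rfl | hx0
  · simp [infDist_zero_of_mem N.zero_mem]
  set c : 𝕜 := (‖x‖ : 𝕜)
  have hc : c ≠ 0 := by simpa [c] using hx0
  have hcN : c • (N : Set H) = N := by
    ext y
    rw [Set.mem_smul_set_iff_inv_smul_mem₀ hc]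
    exact N.smul_mem_iff (inv_ne_zero hc)
  have hunit : ‖c⁻¹ • x‖ = 1 := by simp [c, norm_smul, hx0]
  calc infDist x N = infDist (c • c⁻¹ • x) (c • (N : Set H)) := by rw [smul_inv_smul₀ hc, hcN]
    _ = ‖x‖ * infDist (c⁻¹ • x) N := by rw [infDist_smul₀ hc]; simp [c]
    _ ≤ ‖x‖ * gapDelta (M : Set H) N := by
        gcongr
        exact infDist_le_gapDelta N.zero_mem (M.smul_mem _ hx) hunit

lemma gapDelta_le_gapHat_left (M N : Set H) : gapDelta M N ≤ gapHat M N := le_max_left _ _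

lemma gapDelta_le_gapHat_right (M N : Set H) : gapDelta N M ≤ gapHat M N := le_max_right _ _

end Gap

namespace IsOuterInv

variable {E F : Type*} [NormedAddCommGroup E] [NormedSpace ℂ E] [NormedAddCommGroup F]
  [NormedSpace ℂ F] {A : E →L[ℂ] F} {T : Submodule ℂ E} {S : Submodule ℂ F} {G : F →L[ℂ] E}

lemma apply_apply_of_mem (hG : IsOuterInv A T S G) {x : E} (hx : x ∈ T) : G (A x) = x := by
  obtain ⟨hGAG, hR, -⟩ := hG
  rw [← hR] at hx
  obtain ⟨y, rfl⟩ := hx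
  exact DFunLike.congr_fun hGAG y

lemma norm_le_of_mem (hG : IsOuterInv A T S G) {x : E} (hx : x ∈ T) : ‖x‖ ≤ ‖G‖ * ‖A x‖ := by
  simpa [hG.apply_apply_of_mem hx] using G.le_opNorm (A x)

lemma norm_le_add_infDist (hG : IsOuterInv A T S G) (x : E) :
    ‖x‖ ≤ ‖G‖ * ‖A x‖ + (1 + ‖A‖ * ‖G‖) * infDist x T := by
  have hpos : 0 < 1 + ‖A‖ * ‖G‖ := by positivity
  suffices (‖x‖ - ‖G‖ * ‖A x‖) / (1 + ‖A‖ * ‖G‖) ≤ infDist x T by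
    rw [div_le_iff₀ hpos] at this
    linarith
  refine (le_infDist ⟨0, T.zero_mem⟩).2 fun y hy => ?_
  rw [div_le_iff₀ hpos, dist_eq_norm]
  have hAy : ‖A y‖ ≤ ‖A x‖ + ‖A‖ * ‖x - y‖ := by
    calc ‖A y‖ ≤ ‖A x‖ + ‖A x - A y‖ := norm_le_insert _ _
      _ ≤ ‖A x‖ + ‖A‖ * ‖x - y‖ := by rw [← map_sub]; gcongr; exact A.le_opNorm _
  have hyG := hG.norm_le_of_mem hy
  have hxy : ‖x‖ ≤ ‖y‖ + ‖x - y‖ := norm_le_insert' _ _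
  nlinarith [norm_nonneg G]

lemma gapDelta_image_le (hG : IsOuterInv A T S G) (T' : Submodule ℂ E) :
    gapDelta (A '' T) (A '' T') ≤ ‖A‖ * ‖G‖ * gapDelta (T : Set E) T' := by
  refine gapDelta_le (by positivity [gapDelta_nonneg (T : Set E) T']) ?_
  rintro _ ⟨x, hx, rfl⟩ hAx
  have hxG : ‖x‖ ≤ ‖G‖ := by simpa [hAx] using hG.norm_le_of_mem hx
  calc infDist (A x) (A '' T') ≤ ‖A‖ * infDist x T' := A.lipschitz.infDist_image_le x T'
    _ ≤ ‖A‖ * (‖x‖ * gapDelta (T : Set E) T') := by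
        gcongr; exact infDist_le_norm_mul_gapDelta T T' hx
    _ ≤ ‖A‖ * ‖G‖ * gapDelta (T : Set E) T' := by
        rw [mul_assoc]; gcongr; exact gapDelta_nonneg _ _

lemma gapDelta_image_le_of_gapDelta_le (hG : IsOuterInv A T S G) (T' : Submodule ℂ E) {δ : ℝ}
    (hδ : gapDelta (T' : Set E) T ≤ δ) (hδ1 : (1 + ‖A‖ * ‖G‖) * δ < 1) :
    gapDelta (A '' T') (A '' T) ≤ ‖A‖ * ‖G‖ * δ / (1 - (1 + ‖A‖ * ‖G‖) * δ) := by
  have hδ0 : 0 ≤ δ := (gapDelta_nonneg _ _).trans hδ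
  have hd : 0 < 1 - (1 + ‖A‖ * ‖G‖) * δ := by linarith
  refine gapDelta_le (by positivity) ?_
  rintro _ ⟨x, hx, rfl⟩ hAx
  have hdist : infDist x T ≤ ‖x‖ * δ :=
    (infDist_le_norm_mul_gapDelta T' T hx).trans (by gcongr)
  have hxG : ‖x‖ ≤ ‖G‖ / (1 - (1 + ‖A‖ * ‖G‖) * δ) := by
    rw [le_div_iff₀ hd]
    have := hG.norm_le_add_infDist x
    rw [hAx, mul_one] at this
    nlinarith [mul_le_mul_of_nonneg_left hdist (by positivity : (0 : ℝ) ≤ 1 + ‖A‖ * ‖G‖)]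
  calc infDist (A x) (A '' T) ≤ ‖A‖ * infDist x T := A.lipschitz.infDist_image_le x T
    _ ≤ ‖A‖ * (‖G‖ / (1 - (1 + ‖A‖ * ‖G‖) * δ) * δ) := by gcongr; exact hdist.trans (by gcongr)
    _ = ‖A‖ * ‖G‖ * δ / (1 - (1 + ‖A‖ * ‖G‖) * δ) := by ring

end IsOuterInv

theorem stmt_7_general (A : X →L[ℂ] Y) (T T' : Submodule ℂ X) (S : Submodule ℂ Y)
    (G : Y →L[ℂ] X) (hG : IsOuterInv A T S G)
    (hgap : gapHat (T : Set X) (T' : Set X) < 1 / (1 + ‖A‖ * ‖G‖)) :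
    gapHat (A '' (T : Set X)) (A '' (T' : Set X)) ≤
      ‖A‖ * ‖G‖ * gapHat (T : Set X) (T' : Set X) /
        (1 - (1 + ‖A‖ * ‖G‖) * gapHat (T : Set X) (T' : Set X)) := by
  set δ := gapHat (T : Set X) (T' : Set X)
  have hδ0 : 0 ≤ δ := (gapDelta_nonneg _ _).trans (gapDelta_le_gapHat_left _ _)
  have hδ1 : (1 + ‖A‖ * ‖G‖) * δ < 1 := by
    rwa [lt_div_iff₀ (by positivity), mul_comm] at hgap
  refine max_le ?_ (hG.gapDelta_image_le_of_gapDelta_le T' (gapDelta_le_gapHat_right _ _) hδ1)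
  calc gapDelta (A '' T) (A '' T') ≤ ‖A‖ * ‖G‖ * gapDelta (T : Set X) T' := hG.gapDelta_image_le T'
    _ ≤ ‖A‖ * ‖G‖ * δ := by gcongr; exact gapDelta_le_gapHat_left _ _
    _ ≤ ‖A‖ * ‖G‖ * δ / (1 - (1 + ‖A‖ * ‖G‖) * δ) := le_div_self (by positivity) (by linarith)
      (sub_le_self _ (by positivity))

theorem stmt_7 (A : X →L[ℂ] Y) (T T' : Submodule ℂ X) (S : Submodule ℂ Y)
    (hT : IsClosed (T : Set X)) (hT' : IsClosed (T' : Set X)) (hS : IsClosed (S : Set Y))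
    (G : Y →L[ℂ] X) (hG : IsOuterInv A T S G)
    (hgap : gapHat (T : Set X) (T' : Set X) < 1 / (1 + ‖A‖ * ‖G‖)) :
    gapHat (A '' (T : Set X)) (A '' (T' : Set X)) ≤
      ‖A‖ * ‖G‖ * gapHat (T : Set X) (T' : Set X) /
        (1 - (1 + ‖A‖ * ‖G‖) * gapHat (T : Set X) (T' : Set X)) :=
  stmt_7_general A T T' S G hG hgap
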